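/- arXiv:2003.05382 — 4 statements merged into one kernel-verified Lean document; each statement's English description precedes it below -/
import Mathlib

section
/- For distribution functions F,G on [0,∞), the function F ∪∨ G := FG/(F+G-FG) (with value 0 whenever F(x)=0 or G(x)=0) is again a distribution function on [0,∞). -/
/-!
For `a, b ≠ 0`, `ab / (a + b - ab) = (a⁻¹ + b⁻¹ - 1)⁻¹`. On `[0, 1]²` this reciprocal form
shows at once that the operation is monotone in each argument, bounded by `min a b` (which gives
continuity where one argument vanishes) and continuous where both are positive. Composing with
`(F, G)` transfers monotonicity, right-continuity and the limit `1` at `+∞`.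
-/

open Filter Topology Set

/-- Boolean max-convolution of distribution functions, with value 0 whenever
one of them vanishes. -/
noncomputable def boolMaxConv (F G : ℝ → ℝ) (x : ℝ) : ℝ :=
  if F x = 0 ∨ G x = 0 then 0 else F x * G x / (F x + G x - F x * G x)

noncomputable def boolMax (a b : ℝ) : ℝ :=
  if a = 0 ∨ b = 0 then 0 else a * b / (a + b - a * b)

lemma boolMaxConv_apply (F G : ℝ → ℝ) (x : ℝ) : boolMaxConv F G x = boolMax (F x) (G x) := rfl

namespace boolMax

variable {a b : ℝ}

lemma comm (a b : ℝ) : boolMax a b = boolMax b a := by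
  simp only [boolMax, or_comm (a := a = 0), mul_comm a b, add_comm a b]

lemma zero_left (b : ℝ) : boolMax 0 b = 0 := if_pos (Or.inl rfl)

lemma zero_right (a : ℝ) : boolMax a 0 = 0 := if_pos (Or.inr rfl)

lemma of_ne_zero (ha : a ≠ 0) (hb : b ≠ 0) : boolMax a b = (a⁻¹ + b⁻¹ - 1)⁻¹ := by
  rw [boolMax, if_neg (not_or.2 ⟨ha, hb⟩), ← inv_div]
  congr 1
  field_simp
  ring

lemma inv_add_inv_sub_one_pos (ha : 0 < a) (hb : 0 < b) (hb1 : b ≤ 1) :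
    0 < a⁻¹ + b⁻¹ - 1 := by
  have := one_le_inv₀ hb |>.2 hb1
  linarith [inv_pos.2 ha]

lemma nonneg (ha : 0 ≤ a) (hb : 0 ≤ b) (hb1 : b ≤ 1) : 0 ≤ boolMax a b := by
  rcases ha.eq_or_lt with rfl | ha
  · exact (zero_left b).ge
  rcases hb.eq_or_lt with rfl | hb
  · exact (zero_right a).ge
  rw [of_ne_zero ha.ne' hb.ne']
  exact (inv_pos.2 (inv_add_inv_sub_one_pos ha hb hb1)).le

lemma le_left (ha : 0 ≤ a) (hb : 0 ≤ b) (hb1 : b ≤ 1) : boolMax a b ≤ a := by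
  rcases ha.eq_or_lt with rfl | ha
  · exact (zero_left b).le
  rcases hb.eq_or_lt with rfl | hb
  · exact (zero_right a).trans_le ha.le
  rw [of_ne_zero ha.ne' hb.ne']
  calc (a⁻¹ + b⁻¹ - 1)⁻¹ ≤ a⁻¹⁻¹ := by
        gcongr
        linarith [one_le_inv₀ hb |>.2 hb1]
    _ = a := inv_inv a

lemma le_min (ha : 0 ≤ a) (hb : 0 ≤ b) (ha1 : a ≤ 1) (hb1 : b ≤ 1) :
    boolMax a b ≤ min a b :=
  le_min_iff.2 ⟨le_left ha hb hb1, comm a b ▸ le_left hb ha ha1⟩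

lemma monotoneOn : MonotoneOn (Function.uncurry boolMax) (Icc 0 1 ×ˢ Icc 0 1) := by
  rintro ⟨a, b⟩ ⟨⟨ha, -⟩, hb, -⟩ ⟨a', b'⟩ ⟨⟨-, ha'1⟩, -, hb'1⟩ ⟨haa', hbb'⟩
  dsimp only [Function.uncurry_apply_pair] at *
  rcases ha.eq_or_lt with rfl | ha
  · exact (zero_left b).trans_le (nonneg haa' (hb.trans hbb') hb'1)
  rcases hb.eq_or_lt with rfl | hb
  · exact (zero_right a).trans_le (nonneg (ha.le.trans haa') hbb' hb'1)
  have ha' := ha.trans_le haa'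
  have hb' := hb.trans_le hbb'
  rw [of_ne_zero ha.ne' hb.ne', of_ne_zero ha'.ne' hb'.ne']
  gcongr
  exact inv_add_inv_sub_one_pos ha' hb' hb'1

lemma continuousAt (ha : a ≠ 0) (hb : b ≠ 0) (hab : a⁻¹ + b⁻¹ - 1 ≠ 0) :
    ContinuousAt (Function.uncurry boolMax) (a, b) := by
  have hformula : ContinuousAt (fun p : ℝ × ℝ ↦ (p.1⁻¹ + p.2⁻¹ - 1)⁻¹) (a, b) :=
    (((continuousAt_fst.inv₀ ha).add (continuousAt_snd.inv₀ hb)).sub continuousAt_const).inv₀ hab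
  refine hformula.congr ?_
  filter_upwards [continuousAt_fst.eventually_ne ha, continuousAt_snd.eventually_ne hb]
    with p hp1 hp2
  exact (of_ne_zero hp1 hp2).symm

lemma continuousOn : ContinuousOn (Function.uncurry boolMax) (Icc 0 1 ×ˢ Icc 0 1) := by
  rintro ⟨a, b⟩ ⟨⟨ha, ha1⟩, hb, hb1⟩
  by_cases hzero : a = 0 ∨ b = 0
  · have hmin : min a b = 0 := by rcases hzero with rfl | rfl <;> simp [ha, hb]
    have hlim : Tendsto (fun p : ℝ × ℝ ↦ min p.1 p.2) (𝓝[Icc 0 1 ×ˢ Icc 0 1] (a, b)) (𝓝 0) :=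
      hmin ▸ (continuous_fst.min continuous_snd).continuousWithinAt
    rw [ContinuousWithinAt, Function.uncurry_apply_pair, show boolMax a b = 0 from if_pos hzero]
    refine squeeze_zero' ?_ ?_ hlim <;> filter_upwards [self_mem_nhdsWithin]
      with p ⟨⟨hp1, hp1'⟩, hp2, hp2'⟩
    exacts [nonneg hp1 hp2 hp2', le_min hp1 hp2 hp1' hp2']
  · push Not at hzero
    refine (continuousAt hzero.1 hzero.2 ?_).continuousWithinAt
    exact (inv_add_inv_sub_one_pos (ha.lt_of_ne' hzero.1) (hb.lt_of_ne' hzero.2) hb1).ne'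

end boolMax

lemma Monotone.mem_Icc_zero_one_of_tendsto {F : ℝ → ℝ} (hmono : Monotone F)
    (hneg : ∀ x < (0 : ℝ), F x = 0) (htop : Tendsto F atTop (𝓝 1)) (x : ℝ) : F x ∈ Icc 0 1 :=
  ⟨hmono.le_of_tendsto (tendsto_const_nhds.congr'
      ((eventually_lt_atBot 0).mono fun y hy ↦ (hneg y hy).symm)) x,
    hmono.ge_of_tendsto htop x⟩

theorem boolMaxConv_isDistributionFunction (F G : ℝ → ℝ)
    (hFmono : Monotone F) (hGmono : Monotone G)
    (hFrc : ∀ x, ContinuousWithinAt F (Ici x) x)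
    (hGrc : ∀ x, ContinuousWithinAt G (Ici x) x)
    (hFneg : ∀ x < (0:ℝ), F x = 0) (hGneg : ∀ x < (0:ℝ), G x = 0)
    (hFtop : Tendsto F atTop (𝓝 1)) (hGtop : Tendsto G atTop (𝓝 1)) :
    Monotone (boolMaxConv F G) ∧
    (∀ x, ContinuousWithinAt (boolMaxConv F G) (Ici x) x) ∧
    (∀ x < (0:ℝ), boolMaxConv F G x = 0) ∧
    Tendsto (boolMaxConv F G) atTop (𝓝 1) := by
  have hF := hFmono.mem_Icc_zero_one_of_tendsto hFneg hFtop
  have hG := hGmono.mem_Icc_zero_one_of_tendsto hGneg hGtop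
  have hFG : ∀ x, (F x, G x) ∈ Icc 0 1 ×ˢ Icc 0 1 := fun x ↦ ⟨hF x, hG x⟩
  refine ⟨fun x y hxy ↦ ?_, fun x ↦ ?_, fun x hx ↦ ?_, ?_⟩
  · exact boolMax.monotoneOn (hFG x) (hFG y) ⟨hFmono hxy, hGmono hxy⟩
  · exact ContinuousWithinAt.comp (f := fun y ↦ (F y, G y)) (boolMax.continuousOn _ (hFG x))
      ((hFrc x).prodMk (hGrc x)) fun y _ ↦ hFG y
  · rw [boolMaxConv_apply, hFneg x hx, boolMax.zero_left]
  · have hcont : ContinuousAt (Function.uncurry boolMax) (1, 1) :=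
      boolMax.continuousAt one_ne_zero one_ne_zero (by norm_num)
    have hval : boolMax 1 1 = 1 := by norm_num [boolMax.of_ne_zero]
    exact hval ▸ hcont.tendsto.comp (hFtop.prodMk_nhds hGtop)
end

section
/- The map Λ^∨ is a homomorphism from classical max-convolution to free max-convolution: for all a,b ∈ [0,1], Λ^∨(ab) = max{0, Λ^∨(a)+Λ^∨(b)-1}, where Λ^∨(0)=0 and Λ^∨(x)=max{0,1+log x} for x∈(0,1]. -/
noncomputable def lamVee (x : ℝ) : ℝ := if x = 0 then 0 else max 0 (1 + Real.log x)

/-- On values `≤ 1`, a nonpositive argument already forces both sides to `0`. -/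
lemma max_zero_max_zero_add_max_zero_sub_one {u v : ℝ} (hu : u ≤ 1) (hv : v ≤ 1) :
    max 0 (max 0 u + max 0 v - 1) = max 0 (u + v - 1) := by
  rcases le_total u 0 with hu0 | hu0 <;> rcases le_total v 0 with hv0 | hv0 <;>
    simp only [max_eq_left, max_eq_right, hu0, hv0] <;>
    rw [max_eq_left (by linarith), max_eq_left (by linarith)]

@[simp]
lemma lamVee_zero : lamVee 0 = 0 := if_pos rfl

lemma lamVee_of_ne_zero {x : ℝ} (hx : x ≠ 0) : lamVee x = max 0 (1 + Real.log x) := if_neg hx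

lemma lamVee_le_one {x : ℝ} (hx₀ : 0 ≤ x) (hx₁ : x ≤ 1) : lamVee x ≤ 1 := by
  rcases eq_or_ne x 0 with rfl | hx
  · simp
  · rw [lamVee_of_ne_zero hx]
    exact max_le zero_le_one (by linarith [Real.log_nonpos hx₀ hx₁])

theorem lamVee_homomorphism (a b : ℝ) (ha : a ∈ Set.Icc (0:ℝ) 1)
    (hb : b ∈ Set.Icc (0:ℝ) 1) :
    lamVee (a * b) = max 0 (lamVee a + lamVee b - 1) := by
  rcases eq_or_ne a 0 with rfl | ha₀
  · rw [zero_mul, lamVee_zero, zero_add, max_eq_left (by linarith [lamVee_le_one hb.1 hb.2])]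
  rcases eq_or_ne b 0 with rfl | hb₀
  · rw [mul_zero, lamVee_zero, add_zero, max_eq_left (by linarith [lamVee_le_one ha.1 ha.2])]
  rw [lamVee_of_ne_zero (mul_ne_zero ha₀ hb₀), lamVee_of_ne_zero ha₀, lamVee_of_ne_zero hb₀,
    max_zero_max_zero_add_max_zero_sub_one (by linarith [Real.log_nonpos ha.1 ha.2])
      (by linarith [Real.log_nonpos hb.1 hb.2]),
    Real.log_mul ha₀ hb₀]
  ring_nf
end

section
/- The operators B_t^∨ on distribution-function values, defined by B_t^∨(a) := b_{1/(1+t)}(max{(1+t)a - t, 0}) where b_s(a)=a/(s-(s-1)a), form a semigroup: B_t^∨ ∘ B_s^∨ = B_{t+s}^∨ for all s,t ≥ 0. -/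
/-!
In the coordinate `w = 1 / (1 - a)` the operator `B_t^∨` becomes the truncated translation
`w ↦ max (w - t) 1`, and truncated translations by nonnegative amounts compose additively.
The point `a = 1` (that is, `w = ∞`) is fixed by every `B_t^∨`.
-/

/-- Boolean max-convolution power on values. -/
noncomputable def boolMaxPow (s a : ℝ) : ℝ := a / (s - (s - 1) * a)

/-- The max-Belinschi-Nica operator on distribution-function values. -/
noncomputable def BVee (t a : ℝ) : ℝ := boolMaxPow (1 / (1 + t)) (max ((1 + t) * a - t) 0)

lemma boolMaxPow_zero (s : ℝ) : boolMaxPow s 0 = 0 := by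
  simp [boolMaxPow]

lemma boolMaxPow_one (s : ℝ) : boolMaxPow s 1 = 1 := by
  simp [boolMaxPow]

lemma BVee_one (t : ℝ) : BVee t 1 = 1 := by
  simp [BVee, boolMaxPow_one]

lemma BVee_lt_one_and_inv_one_sub {t a : ℝ} (ht : -1 < t) (ha : a < 1) :
    BVee t a < 1 ∧ (1 - BVee t a)⁻¹ = max ((1 - a)⁻¹ - t) 1 := by
  have h1t : 0 < 1 + t := by linarith
  have h1a : 0 < 1 - a := by linarith
  rcases le_or_gt ((1 + t) * a - t) 0 with hc | hc
  · have hw : (1 - a)⁻¹ - t ≤ 1 := by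
      rw [inv_eq_one_div, div_sub' h1a.ne', div_le_one h1a]
      linarith
    simp [BVee, max_eq_right hc, boolMaxPow_zero, max_eq_right hw]
  · set c := (1 + t) * a - t with hc_def
    have h1c : 0 < 1 - c := by nlinarith
    have hden : 0 < 1 + t * c := by nlinarith
    have hB : BVee t a = (1 + t) * c / (1 + t * c) := by
      rw [BVee, ← hc_def, max_eq_left hc.le, boolMaxPow]
      field_simp
      ring
    have hB_sub : 1 - BVee t a = (1 - c) / (1 + t * c) := by
      rw [hB]
      field_simp
      ring
    have hw : (1 - a)⁻¹ - t = (1 + t * c) / (1 - c) := by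
      field_simp
      ring
    refine ⟨by linarith [div_pos h1c hden], ?_⟩
    rw [hB_sub, inv_div, hw, max_eq_left ((one_le_div₀ h1c).2 ?_)]
    nlinarith

lemma max_sub_max_sub_of_nonneg {w s t : ℝ} (ht : 0 ≤ t) :
    max (max (w - s) 1 - t) 1 = max (w - (t + s)) 1 := by
  rw [← max_sub_sub_right, max_assoc, max_eq_right (by linarith : 1 - t ≤ 1), sub_sub, add_comm s]

theorem BVee_semigroup (s t : ℝ) (hs : 0 ≤ s) (ht : 0 ≤ t)
    (a : ℝ) (ha : a ∈ Set.Icc (0:ℝ) 1) :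
    BVee t (BVee s a) = BVee (t + s) a := by
  rcases ha.2.lt_or_eq with ha | rfl
  · obtain ⟨hb, hb_inv⟩ := BVee_lt_one_and_inv_one_sub (by linarith : -1 < s) ha
    obtain ⟨-, hc_inv⟩ := BVee_lt_one_and_inv_one_sub (by linarith : -1 < t) hb
    obtain ⟨-, hd_inv⟩ := BVee_lt_one_and_inv_one_sub (by linarith : -1 < t + s) ha
    have h : (1 - BVee t (BVee s a))⁻¹ = (1 - BVee (t + s) a)⁻¹ := by
      rw [hc_inv, hb_inv, hd_inv, max_sub_max_sub_of_nonneg ht]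
    linarith [inv_injective h]
  · simp only [BVee_one]
end

section
/- For the Marchenko–Pastur law π with density (1/(2π))·√((4-x)/x) on (0,4), the function Ψ_π(z) := ∫₀⁴ zx/(1-zx) dπ(x) satisfies Ψ_π(z) = (-2z + 1 - √(1-4z))/(2z) for all real z < 0. -/
/-!
After `√((4 - x) / x) = √(x (4 - x)) / x` the factor `x` cancels, so
`Ψ_π(z) = (2π)⁻¹ ∫₀⁴ z √(x (4 - x)) / (1 - z x) dx`. Writing `w = √(x (4 - x))`,
`z w / (1 - z x) = (x - 2) / w + (1 - 2z) / (z w) - (1 - 4z) / (z w (1 - z x))`,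
and the three terms have the primitives `-w`, `arcsin ((x - 2) / 2)` and an arctangent, all
continuous on `[0, 4]`. Their increments over `[0, 4]` are `0`, `π` and `π / 2`, which gives
`π (1 - 2z - √(1 - 4z)) / z` for every `z < 1/4`, `z ≠ 0`.
-/

open MeasureTheory Real Set

lemma hasDerivAt_arctan_div {f g : ℝ → ℝ} {f' g' x : ℝ} (hf : HasDerivAt f f' x)
    (hg : HasDerivAt g g' x) (hgx : g x ≠ 0) :
    HasDerivAt (fun y => arctan (f y / g y)) ((f' * g x - f x * g') / (f x ^ 2 + g x ^ 2)) x := by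
  refine (hf.div hg hgx).arctan.congr_deriv ?_
  rw [Pi.div_apply]
  field_simp
  ring

noncomputable def mpRoot (x : ℝ) : ℝ := √(x * (4 - x))

lemma sqrt_div_eq_mpRoot_div {x : ℝ} (hx : 0 < x) : √((4 - x) / x) = mpRoot x / x := by
  rw [mpRoot, ← sqrt_sq hx.le, ← sqrt_div' _ (sq_nonneg x), sqrt_sq hx.le]
  congr 1
  field_simp

@[fun_prop]
lemma continuous_mpRoot : Continuous mpRoot := by unfold mpRoot; fun_prop

lemma mpRoot_pos {x : ℝ} (hx : x ∈ Ioo (0 : ℝ) 4) : 0 < mpRoot x :=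
  sqrt_pos.mpr (mul_pos hx.1 (sub_pos.mpr hx.2))

lemma mpRoot_sq {x : ℝ} (hx : x ∈ Ioo (0 : ℝ) 4) : mpRoot x ^ 2 = x * (4 - x) :=
  sq_sqrt (mul_pos hx.1 (sub_pos.mpr hx.2)).le

lemma hasDerivAt_mpRoot {x : ℝ} (hx : x ∈ Ioo (0 : ℝ) 4) :
    HasDerivAt mpRoot ((2 - x) / mpRoot x) x := by
  have hq : HasDerivAt (fun y => y * (4 - y)) (4 - 2 * x) x :=
    ((hasDerivAt_id' x).fun_mul ((hasDerivAt_id' x).const_sub 4)).congr_deriv (by ring)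
  refine (hq.sqrt (mul_pos hx.1 (sub_pos.mpr hx.2)).ne').congr_deriv ?_
  have hw := mpRoot_pos hx
  unfold mpRoot at hw ⊢
  field_simp
  ring

lemma hasDerivAt_arcsin_sub_two_div_two {x : ℝ} (hx : x ∈ Ioo (0 : ℝ) 4) :
    HasDerivAt (fun y => arcsin ((y - 2) / 2)) (1 / mpRoot x) x := by
  have h := (hasDerivAt_arcsin (x := (x - 2) / 2) (by linarith [hx.1]) (by linarith [hx.2])).comp x
    (((hasDerivAt_id' x).sub_const 2).div_const 2)
  refine h.congr_deriv ?_
  have hw := mpRoot_pos hx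
  have : √(1 - ((x - 2) / 2) ^ 2) = mpRoot x / 2 := by
    rw [← sqrt_sq (by positivity : 0 ≤ mpRoot x / 2), div_pow (mpRoot x), mpRoot_sq hx]
    ring_nf
  rw [this]
  field_simp

lemma mul_lt_one_of_lt_quarter {z x : ℝ} (hz : z < 1 / 4) (hx : x ∈ Icc (0 : ℝ) 4) :
    z * x < 1 := by
  rcases le_or_gt z 0 with hz0 | hz0
  · nlinarith [hx.1]
  · nlinarith [hx.2]

/-- The denominator `√(1 - 4z) (2 + w)` never vanishes, so unlike the textbook primitive
`arctan (c √(x / (4 - x)))` this one is continuous up to `x = 4`. -/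
noncomputable def mpAngle (z x : ℝ) : ℝ :=
  arctan (((1 - 2 * z) * (x - 2) - 2 * z * (2 + mpRoot x)) / (√(1 - 4 * z) * (2 + mpRoot x)))

lemma hasDerivAt_mpAngle {z x : ℝ} (hz : z < 1 / 4) (hx : x ∈ Ioo (0 : ℝ) 4) :
    HasDerivAt (mpAngle z) (√(1 - 4 * z) / (2 * mpRoot x * (1 - z * x))) x := by
  set s := √(1 - 4 * z)
  set w := mpRoot x
  have hs : 0 < s := sqrt_pos.mpr (by linarith)
  have hs2 : s ^ 2 = 1 - 4 * z := sq_sqrt (by linarith)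
  have hw : 0 < w := mpRoot_pos hx
  have hw2 : w ^ 2 = x * (4 - x) := mpRoot_sq hx
  have hN := (((hasDerivAt_id' x).sub_const 2).const_mul (1 - 2 * z)).fun_sub
    (((hasDerivAt_mpRoot hx).const_add 2).const_mul (2 * z))
  have hD := ((hasDerivAt_mpRoot hx).const_add 2).const_mul s
  refine (hasDerivAt_arctan_div hN hD (by positivity)).congr_deriv ?_
  have hnum : ((1 - 2 * z) * 1 - 2 * z * ((2 - x) / w)) * (s * (2 + w)) -
      ((1 - 2 * z) * (x - 2) - 2 * z * (2 + w)) * (s * ((2 - x) / w)) =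
      2 * s * (1 - 2 * z) * (2 + w) / w := by
    field_simp
    linear_combination (1 - 2 * z) * hw2
  have hden : ((1 - 2 * z) * (x - 2) - 2 * z * (2 + w)) ^ 2 + (s * (2 + w)) ^ 2 =
      4 * (1 - 2 * z) * (2 + w) * (1 - z * x) := by
    linear_combination (2 + w) ^ 2 * hs2 + (1 - 4 * z + 4 * z ^ 2) * hw2
  rw [hnum, hden]
  have h12 : 0 < 1 - 2 * z := by linarith
  field_simp
  norm_num

noncomputable def mpPrimitive (z x : ℝ) : ℝ :=
  -mpRoot x + (1 - 2 * z) / z * arcsin ((x - 2) / 2) - 2 * √(1 - 4 * z) / z * mpAngle z x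

lemma hasDerivAt_mpPrimitive {z x : ℝ} (hz : z < 1 / 4) (hz0 : z ≠ 0)
    (hx : x ∈ Ioo (0 : ℝ) 4) :
    HasDerivAt (mpPrimitive z) (z * mpRoot x / (1 - z * x)) x := by
  have h := ((hasDerivAt_mpRoot hx).neg.add
    ((hasDerivAt_arcsin_sub_two_div_two hx).const_mul ((1 - 2 * z) / z))).sub
    ((hasDerivAt_mpAngle hz hx).const_mul (2 * √(1 - 4 * z) / z))
  refine h.congr_deriv ?_
  have hs2 : √(1 - 4 * z) ^ 2 = 1 - 4 * z := sq_sqrt (by linarith)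
  have hw := (mpRoot_pos hx).ne'
  have hu := (sub_pos.mpr (mul_lt_one_of_lt_quarter hz (Ioo_subset_Icc_self hx))).ne'
  set u := 1 - z * x with hu_def
  set s := √(1 - 4 * z)
  field_simp
  linear_combination (-1) * hs2 - z ^ 2 * mpRoot_sq hx + (1 - 4 * z + x * z) * hu_def

lemma continuous_mpPrimitive {z : ℝ} (hz : z < 1 / 4) : Continuous (mpPrimitive z) := by
  have hs : 0 < √(1 - 4 * z) := sqrt_pos.mpr (by linarith)
  have hD : ∀ y, √(1 - 4 * z) * (2 + mpRoot y) ≠ 0 := fun y =>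
    (mul_pos hs (add_pos_of_pos_of_nonneg two_pos (sqrt_nonneg _))).ne'
  unfold mpPrimitive mpAngle
  fun_prop (disch := exact hD _)

lemma mpAngle_four_sub_mpAngle_zero {z : ℝ} (hz : z < 1 / 4) :
    mpAngle z 4 - mpAngle z 0 = π / 2 := by
  have hs : 0 < √(1 - 4 * z) := sqrt_pos.mpr (by linarith)
  have hs2 : √(1 - 4 * z) ^ 2 = 1 - 4 * z := sq_sqrt (by linarith)
  have hw4 : mpRoot 4 = 0 := by simp [mpRoot]
  have hw0 : mpRoot 0 = 0 := by simp [mpRoot]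
  have h4 : mpAngle z 4 = arctan √(1 - 4 * z) := by
    rw [mpAngle, hw4]
    congr 1
    rw [div_eq_iff (by positivity)]
    linear_combination (-2) * hs2
  have h0 : mpAngle z 0 = -arctan (√(1 - 4 * z))⁻¹ := by
    rw [mpAngle, hw0, ← arctan_neg]
    congr 1
    field_simp
    ring
  rw [h4, h0, arctan_inv_of_pos hs]
  ring

lemma mpPrimitive_four_sub_mpPrimitive_zero {z : ℝ} (hz : z < 1 / 4) :
    mpPrimitive z 4 - mpPrimitive z 0 = π * (1 - 2 * z - √(1 - 4 * z)) / z := by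
  have hAngle : mpAngle z 4 = mpAngle z 0 + π / 2 := by
    linarith [mpAngle_four_sub_mpAngle_zero hz]
  simp only [mpPrimitive, mpRoot, hAngle]
  norm_num
  ring

theorem integral_mpRoot_div {z : ℝ} (hz : z < 1 / 4) (hz0 : z ≠ 0) :
    ∫ x in (0 : ℝ)..4, z * mpRoot x / (1 - z * x) = π * (1 - 2 * z - √(1 - 4 * z)) / z := by
  rw [← mpPrimitive_four_sub_mpPrimitive_zero hz]
  refine intervalIntegral.integral_eq_sub_of_hasDerivAt_of_le (by norm_num)
    (continuous_mpPrimitive hz).continuousOn (fun x hx => hasDerivAt_mpPrimitive hz hz0 hx) ?_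
  refine (ContinuousOn.div (by fun_prop) (by fun_prop) fun x hx => ?_).intervalIntegrable
  rw [uIcc_of_le (by norm_num)] at hx
  exact (sub_pos.mpr (mul_lt_one_of_lt_quarter hz hx)).ne'

theorem psi_marchenkoPastur (z : ℝ) (hz : z < 0) :
    ∫ x in Set.Ioo (0:ℝ) 4,
        (z * x / (1 - z * x)) * ((1 / (2 * Real.pi)) * Real.sqrt ((4 - x) / x)) =
      (-2 * z + 1 - Real.sqrt (1 - 4 * z)) / (2 * z) := by
  calc ∫ x in Ioo (0 : ℝ) 4, z * x / (1 - z * x) * (1 / (2 * π) * √((4 - x) / x))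
      = ∫ x in Ioo (0 : ℝ) 4, 1 / (2 * π) * (z * mpRoot x / (1 - z * x)) := by
        refine setIntegral_congr_fun measurableSet_Ioo fun x hx => ?_
        rw [sqrt_div_eq_mpRoot_div hx.1]
        field_simp [hx.1.ne']
    _ = 1 / (2 * π) * ∫ x in (0 : ℝ)..4, z * mpRoot x / (1 - z * x) := by
        rw [integral_const_mul, intervalIntegral.integral_of_le (by norm_num),
          integral_Ioc_eq_integral_Ioo]
    _ = (-2 * z + 1 - √(1 - 4 * z)) / (2 * z) := by
        rw [integral_mpRoot_div (by linarith) hz.ne]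
        field_simp [pi_ne_zero]
        ring
end
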